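/- Let H and K be complex Hilbert spaces and f : H →L[ℂ] K a bounded linear map. Let |f| : H →L[ℂ] H denote the unique positive square root of f† ∘ f, and |f†| : K →L[ℂ] K the unique positive square root of f ∘ f†, where f† is the Hilbert space adjoint of f. Then |f†| ∘ f = f ∘ |f|. -/

import Mathlib

/-!
Since `aK² ∘ f = f ∘ f† ∘ f = f ∘ aH²`, it suffices that intertwining the squares of two positive
operators forces intertwining of the operators themselves. On `H ⊕ K`, the off-diagonal operator
`[[0, 0], [f, 0]]` then commutes with `diag(aH, aK)²`, hence with every continuous function of it,
in particular with its positive square root `diag(aH, aK)`; reading off the lower-left block gives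
`aK ∘ f = f ∘ aH`.
-/

theorem Commute.of_mul_self_left {A : Type*} [NonUnitalCStarAlgebra A] [PartialOrder A]
    [StarOrderedRing A] {a b : A} (ha : 0 ≤ a) (h : Commute (a * a) b) : Commute a b := by
  rw [← CFC.sqrt_mul_self a, CFC.sqrt_eq_real_sqrt (a * a)]
  exact h.cfcₙ_real _

namespace ContinuousLinearMap

section Blocks

variable {𝕜 H K : Type*} [RCLike 𝕜] [NormedAddCommGroup H] [InnerProductSpace 𝕜 H]
  [NormedAddCommGroup K] [InnerProductSpace 𝕜 K]

noncomputable def withLpProdMap (a : H →L[𝕜] H) (b : K →L[𝕜] K) :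
    WithLp 2 (H × K) →L[𝕜] WithLp 2 (H × K) :=
  (WithLp.prodContinuousLinearEquiv 2 𝕜 H K).symm.toContinuousLinearMap ∘L a.prodMap b ∘L
    (WithLp.prodContinuousLinearEquiv 2 𝕜 H K).toContinuousLinearMap

noncomputable def withLpLowerLeft (f : H →L[𝕜] K) :
    WithLp 2 (H × K) →L[𝕜] WithLp 2 (H × K) :=
  (WithLp.prodContinuousLinearEquiv 2 𝕜 H K).symm.toContinuousLinearMap ∘L inr 𝕜 H K ∘L f ∘L
    fst 𝕜 H K ∘L (WithLp.prodContinuousLinearEquiv 2 𝕜 H K).toContinuousLinearMap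

@[simp]
theorem withLpProdMap_apply (a : H →L[𝕜] H) (b : K →L[𝕜] K) (x : WithLp 2 (H × K)) :
    withLpProdMap a b x = WithLp.toLp 2 (a x.fst, b x.snd) := rfl

@[simp]
theorem withLpLowerLeft_apply (f : H →L[𝕜] K) (x : WithLp 2 (H × K)) :
    withLpLowerLeft f x = WithLp.toLp 2 (0, f x.fst) := rfl

theorem withLpProdMap_mul (a a' : H →L[𝕜] H) (b b' : K →L[𝕜] K) :
    withLpProdMap a b * withLpProdMap a' b' = withLpProdMap (a ∘L a') (b ∘L b') := rfl

theorem withLpLowerLeft_mul_withLpProdMap (f : H →L[𝕜] K) (a : H →L[𝕜] H) (b : K →L[𝕜] K) :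
    withLpLowerLeft f * withLpProdMap a b = withLpLowerLeft (f ∘L a) := rfl

theorem withLpProdMap_mul_withLpLowerLeft (f : H →L[𝕜] K) (a : H →L[𝕜] H) (b : K →L[𝕜] K) :
    withLpProdMap a b * withLpLowerLeft f = withLpLowerLeft (b ∘L f) := by
  ext x
  simp

theorem withLpLowerLeft_injective :
    Function.Injective (withLpLowerLeft : (H →L[𝕜] K) → _) := by
  intro f g h
  ext x
  simpa using congr(($h (WithLp.toLp 2 (x, 0))).snd)

theorem isPositive_withLpProdMap {a : H →L[𝕜] H} {b : K →L[𝕜] K} (ha : a.IsPositive)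
    (hb : b.IsPositive) : (withLpProdMap a b).IsPositive := by
  refine ⟨fun x y => ?_, fun x => ?_⟩
  · simp [WithLp.prod_inner_apply, ha.inner_left_eq_inner_right, hb.inner_left_eq_inner_right]
  · simpa [reApplyInnerSelf, WithLp.prod_inner_apply] using
      add_nonneg (ha.re_inner_nonneg_left x.fst) (hb.re_inner_nonneg_left x.snd)

end Blocks

variable {H K : Type*} [NormedAddCommGroup H] [InnerProductSpace ℂ H] [CompleteSpace H]
  [NormedAddCommGroup K] [InnerProductSpace ℂ K] [CompleteSpace K]

theorem IsPositive.comp_eq_comp_of_comp_mul_self_eq {a : H →L[ℂ] H} {b : K →L[ℂ] K}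
    (ha : a.IsPositive) (hb : b.IsPositive) {f : H →L[ℂ] K}
    (h : f ∘L (a ∘L a) = (b ∘L b) ∘L f) : f ∘L a = b ∘L f := by
  have hA : 0 ≤ withLpProdMap a b := (nonneg_iff_isPositive _).2 (isPositive_withLpProdMap ha hb)
  have hA2 : Commute (withLpProdMap a b * withLpProdMap a b) (withLpLowerLeft f) := by
    rw [Commute, SemiconjBy, withLpProdMap_mul, withLpProdMap_mul_withLpLowerLeft,
      withLpLowerLeft_mul_withLpProdMap, h]
  apply withLpLowerLeft_injective
  rw [← withLpLowerLeft_mul_withLpProdMap f a b, ← withLpProdMap_mul_withLpLowerLeft]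
  exact (hA2.of_mul_self_left hA).eq.symm

end ContinuousLinearMap

open ContinuousLinearMap

theorem absoluteValue_commutes
    {H : Type*} [NormedAddCommGroup H] [InnerProductSpace ℂ H] [CompleteSpace H]
    {K : Type*} [NormedAddCommGroup K] [InnerProductSpace ℂ K] [CompleteSpace K]
    (f : H →L[ℂ] K)
    (aH : H →L[ℂ] H) (haH : aH.IsPositive)
    (haH2 : aH.comp aH = (ContinuousLinearMap.adjoint f).comp f)
    (aK : K →L[ℂ] K) (haK : aK.IsPositive)
    (haK2 : aK.comp aK = f.comp (ContinuousLinearMap.adjoint f)) :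
    aK.comp f = f.comp aH := by
  refine (haH.comp_eq_comp_of_comp_mul_self_eq haK ?_).symm
  rw [haH2, haK2, comp_assoc]
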